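/- arXiv:2510.14650 — 3 statements merged into one kernel-verified Lean document; each statement's English description precedes it below -/
import Mathlib

section
/- Let A_1, …, A_{m−1} be a skew Clifford system on ℝ^{n+1} and let F(x,y) = ⟨x,y⟩² + Σ_{q=1}^{m−1} ⟨A_q x, y⟩². Then for all x, y ∈ ℝ^{n+1}: the gradient of F in the x-variable equals 2⟨x,y⟩ y + 2 Σ_{q=1}^{m−1} ⟨A_q x, y⟩ A_qᵀ y, its squared norm equals 4 F(x,y) ‖y‖², the squared norm of the gradient of F in the y-variable equals 4 F(x,y) ‖x‖², and consequently the squared norm of the full Euclidean gradient of F at (x,y) equals 4 F(x,y)(‖x‖² + ‖y‖²). -/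
open Matrix
open scoped RealInnerProductSpace BigOperators

noncomputable section

/-- A skew Clifford system `A_1, …, A_{m-1}` on `ℝ^N`: skew-symmetric matrices with
`A_p A_q + A_q A_p = -2 δ_{pq} Id`. -/
def IsSkewCliffordSystem {N m : ℕ} (A : Fin (m - 1) → Matrix (Fin N) (Fin N) ℝ) : Prop :=
  (∀ p q, A p * A q + A q * A p =
      if p = q then (-2 : ℝ) • (1 : Matrix (Fin N) (Fin N) ℝ) else 0) ∧
  (∀ p, (A p)ᵀ = -A p)

/-- The action of a matrix on Euclidean space. -/
def act {N : ℕ} (A : Matrix (Fin N) (Fin N) ℝ) (x : EuclideanSpace ℝ (Fin N)) :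
    EuclideanSpace ℝ (Fin N) :=
  Matrix.toEuclideanLin A x

/-- The splitting form of the FKM isoparametric polynomial:
`F(x,y) = ⟨x,y⟩² + Σ_q ⟨A_q x, y⟩²`. -/
def FKM {N m : ℕ} (A : Fin (m - 1) → Matrix (Fin N) (Fin N) ℝ)
    (x y : EuclideanSpace ℝ (Fin N)) : ℝ :=
  ⟪x, y⟫ ^ 2 + ∑ q, ⟪act (A q) x, y⟫ ^ 2

/-!
For fixed `y`, `F(·, y) = ∑ᵢ ⟪·, vᵢ⟫²` for the frame `v = (y, A₁ᵀy, …, A_{m-1}ᵀy)`, and the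
Clifford relations make this frame orthogonal with all its vectors of length `‖y‖`. Hence
`∇ₓF = 2 ∑ᵢ ⟪x, vᵢ⟫ vᵢ` has squared norm `4 ∑ᵢ ⟪x, vᵢ⟫² ‖y‖² = 4 F ‖y‖²`, and symmetrically in `y`
with the frame `(x, A₁x, …, A_{m-1}x)`. On the `L²` product the full gradient is the pair of
partial gradients, so their squared norms add.
-/

section InnerProductSpace

variable {E : Type*} [NormedAddCommGroup E] [InnerProductSpace ℝ E]

theorem norm_sq_sum_smul_of_inner_eq_ite {ι : Type*} [Fintype ι] [DecidableEq ι]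
    {v : ι → E} {r : ℝ} (hv : ∀ i j, ⟪v i, v j⟫ = if i = j then r else 0) (c : ι → ℝ) :
    ‖∑ i, c i • v i‖ ^ 2 = r * ∑ i, c i ^ 2 := by
  rw [← real_inner_self_eq_norm_sq, sum_inner, Finset.mul_sum]
  refine Finset.sum_congr rfl fun i _ => ?_
  simp_rw [inner_sum, real_inner_smul_left, real_inner_smul_right, hv]
  simp only [mul_ite, mul_zero, Finset.sum_ite_eq, Finset.mem_univ, if_true]
  ring

variable [CompleteSpace E]

theorem hasGradientAt_sum_inner_sq {ι : Type*} [Fintype ι] (v : ι → E) (x : E) :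
    HasGradientAt (fun t => ∑ i, ⟪t, v i⟫ ^ 2) (∑ i, (2 * ⟪x, v i⟫) • v i) x := by
  rw [hasGradientAt_iff_hasFDerivAt, map_sum]
  refine HasFDerivAt.fun_sum fun i _ => ?_
  have h := ((innerSL ℝ (v i)).hasFDerivAt (x := x)).pow 2
  simp only [innerSL_apply_apply, fun t => real_inner_comm t (v i)] at h
  refine h.congr_fderiv ?_
  ext h
  simp [real_inner_comm]

theorem norm_sq_gradient_sum_inner_sq {ι : Type*} [Fintype ι] [DecidableEq ι]
    {v : ι → E} {r : ℝ} (hv : ∀ i j, ⟪v i, v j⟫ = if i = j then r else 0) (x : E) :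
    ‖gradient (fun t => ∑ i, ⟪t, v i⟫ ^ 2) x‖ ^ 2 = 4 * (∑ i, ⟪x, v i⟫ ^ 2) * r := by
  rw [(hasGradientAt_sum_inner_sq v x).gradient, norm_sq_sum_smul_of_inner_eq_ite hv]
  simp only [mul_pow, ← Finset.mul_sum]
  ring

variable {F : Type*} [NormedAddCommGroup F] [InnerProductSpace ℝ F] [CompleteSpace F]

theorem gradient_withLp_prod {f : WithLp 2 (E × F) → ℝ} {x : E} {y : F}
    (hf : DifferentiableAt ℝ f (WithLp.toLp 2 (x, y))) :
    gradient f (WithLp.toLp 2 (x, y)) =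
      WithLp.toLp 2 (gradient (fun a => f (WithLp.toLp 2 (a, y))) x,
        gradient (fun b => f (WithLp.toLp 2 (x, b))) y) := by
  set e := (WithLp.prodContinuousLinearEquiv 2 ℝ E F).symm
  have hx : HasFDerivAt (fun a => f (WithLp.toLp 2 (a, y)))
      ((fderiv ℝ f (WithLp.toLp 2 (x, y))).comp (e.toContinuousLinearMap.comp (.inl ℝ E F))) x :=
    hf.hasFDerivAt.comp x (e.hasFDerivAt.comp x (hasFDerivAt_prodMk_left x y))
  have hy : HasFDerivAt (fun b => f (WithLp.toLp 2 (x, b)))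
      ((fderiv ℝ f (WithLp.toLp 2 (x, y))).comp (e.toContinuousLinearMap.comp (.inr ℝ E F))) y :=
    hf.hasFDerivAt.comp y (e.hasFDerivAt.comp y (hasFDerivAt_prodMk_right x y))
  rw [hx.hasGradientAt.gradient, hy.hasGradientAt.gradient, gradient,
    (InnerProductSpace.toDual ℝ _).symm_apply_eq]
  ext ⟨h⟩
  simp only [InnerProductSpace.toDual_apply_apply, WithLp.prod_inner_apply,
    InnerProductSpace.toDual_symm_apply, ContinuousLinearMap.comp_apply,
    ContinuousLinearMap.inl_apply, ContinuousLinearMap.inr_apply, ContinuousLinearEquiv.coe_coe,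
    WithLp.prodContinuousLinearEquiv_symm_apply, e]
  rw [← map_add, ← WithLp.toLp_add, Prod.mk_add_mk, add_zero, zero_add]

end InnerProductSpace

section MatrixAction

variable {N : ℕ}

theorem inner_act_left (M : Matrix (Fin N) (Fin N) ℝ) (u v : EuclideanSpace ℝ (Fin N)) :
    ⟪act M u, v⟫ = ⟪u, act Mᵀ v⟫ := by
  rw [act, act, ← conjTranspose_eq_transpose_of_trivial, toEuclideanLin_conjTranspose_eq_adjoint,
    LinearMap.adjoint_inner_right]

theorem act_add (M P : Matrix (Fin N) (Fin N) ℝ) (u : EuclideanSpace ℝ (Fin N)) :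
    act (M + P) u = act M u + act P u := by
  simp [act]

theorem act_mul (M P : Matrix (Fin N) (Fin N) ℝ) (u : EuclideanSpace ℝ (Fin N)) :
    act (M * P) u = act M (act P u) := by
  simp [act]

theorem act_smul_one (c : ℝ) (u : EuclideanSpace ℝ (Fin N)) :
    act (c • (1 : Matrix (Fin N) (Fin N) ℝ)) u = c • u := by
  simp [act]

theorem act_neg (M : Matrix (Fin N) (Fin N) ℝ) (u : EuclideanSpace ℝ (Fin N)) :
    act (-M) u = -act M u := by
  simp [act]

theorem act_zero (u : EuclideanSpace ℝ (Fin N)) : act (0 : Matrix (Fin N) (Fin N) ℝ) u = 0 := by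
  simp [act]

theorem differentiable_act (M : Matrix (Fin N) (Fin N) ℝ) : Differentiable ℝ (act M) :=
  (LinearMap.toContinuousLinearMap (toEuclideanLin M)).differentiable

theorem inner_self_act_of_transpose_eq_neg {M : Matrix (Fin N) (Fin N) ℝ} (hM : Mᵀ = -M)
    (v : EuclideanSpace ℝ (Fin N)) : ⟪v, act M v⟫ = 0 := by
  have h := inner_act_left M v v
  rw [hM, act_neg, inner_neg_right, real_inner_comm] at h
  linarith

end MatrixAction

section CliffordSystem

variable {N m : ℕ} {A : Fin (m - 1) → Matrix (Fin N) (Fin N) ℝ}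

theorem IsSkewCliffordSystem.transpose (hA : IsSkewCliffordSystem A) :
    IsSkewCliffordSystem fun q => (A q)ᵀ := by
  refine ⟨fun p q => ?_, fun p => ?_⟩
  · simp only [hA.2, neg_mul_neg]
    exact hA.1 p q
  · simp [hA.2]

theorem IsSkewCliffordSystem.inner_act_act (hA : IsSkewCliffordSystem A) (p q : Fin (m - 1))
    (v : EuclideanSpace ℝ (Fin N)) :
    ⟪act (A p) v, act (A q) v⟫ = if p = q then ‖v‖ ^ 2 else 0 := by
  have h_mul : ∀ p q, ⟪act (A p) v, act (A q) v⟫ = -⟪v, act (A p * A q) v⟫ := fun p q => by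
    rw [inner_act_left, hA.2, act_neg, act_mul, inner_neg_right]
  have h_anticomm : 2 * ⟪act (A p) v, act (A q) v⟫ = -⟪v, act (A p * A q + A q * A p) v⟫ := by
    rw [act_add, inner_add_right]
    linarith [h_mul p q, h_mul q p, real_inner_comm (act (A p) v) (act (A q) v)]
  rw [hA.1] at h_anticomm
  split_ifs at h_anticomm ⊢
  · rw [act_smul_one, real_inner_smul_right, real_inner_self_eq_norm_sq] at h_anticomm
    linarith
  · rw [act_zero, inner_zero_right] at h_anticomm
    linarith

def cliffordFrame {k : ℕ} (A : Fin k → Matrix (Fin N) (Fin N) ℝ) (v : EuclideanSpace ℝ (Fin N)) :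
    Option (Fin k) → EuclideanSpace ℝ (Fin N) :=
  fun i => i.elim v fun q => act (A q) v

theorem IsSkewCliffordSystem.inner_cliffordFrame (hA : IsSkewCliffordSystem A)
    (v : EuclideanSpace ℝ (Fin N)) (i j : Option (Fin (m - 1))) :
    ⟪cliffordFrame A v i, cliffordFrame A v j⟫ = if i = j then ‖v‖ ^ 2 else 0 := by
  rcases i with _ | p <;> rcases j with _ | q <;> simp only [cliffordFrame, Option.elim]
  · simp
  · simp [inner_self_act_of_transpose_eq_neg (hA.2 q)]
  · simp [real_inner_comm, inner_self_act_of_transpose_eq_neg (hA.2 p)]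
  · simp [hA.inner_act_act]

theorem FKM_eq_sum_inner_cliffordFrame_transpose (x y : EuclideanSpace ℝ (Fin N)) :
    FKM A x y = ∑ i, ⟪x, cliffordFrame (fun q => (A q)ᵀ) y i⟫ ^ 2 := by
  simp [FKM, Fintype.sum_option, cliffordFrame, inner_act_left]

theorem FKM_eq_sum_inner_cliffordFrame (x y : EuclideanSpace ℝ (Fin N)) :
    FKM A x y = ∑ i, ⟪y, cliffordFrame A x i⟫ ^ 2 := by
  simp [FKM, Fintype.sum_option, cliffordFrame, real_inner_comm]

theorem hasGradientAt_FKM_left (x y : EuclideanSpace ℝ (Fin N)) :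
    HasGradientAt (fun x' => FKM A x' y)
      ((2 * ⟪x, y⟫) • y + ∑ q, (2 * ⟪act (A q) x, y⟫) • act (A q)ᵀ y) x := by
  simp_rw [FKM_eq_sum_inner_cliffordFrame_transpose]
  convert hasGradientAt_sum_inner_sq _ x using 1
  simp [Fintype.sum_option, cliffordFrame, inner_act_left]

theorem IsSkewCliffordSystem.norm_sq_gradient_FKM_left (hA : IsSkewCliffordSystem A)
    (x y : EuclideanSpace ℝ (Fin N)) :
    ‖gradient (fun x' => FKM A x' y) x‖ ^ 2 = 4 * FKM A x y * ‖y‖ ^ 2 := by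
  simp_rw [FKM_eq_sum_inner_cliffordFrame_transpose]
  exact norm_sq_gradient_sum_inner_sq (hA.transpose.inner_cliffordFrame y) x

theorem IsSkewCliffordSystem.norm_sq_gradient_FKM_right (hA : IsSkewCliffordSystem A)
    (x y : EuclideanSpace ℝ (Fin N)) :
    ‖gradient (fun y' => FKM A x y') y‖ ^ 2 = 4 * FKM A x y * ‖x‖ ^ 2 := by
  simp_rw [FKM_eq_sum_inner_cliffordFrame]
  exact norm_sq_gradient_sum_inner_sq (hA.inner_cliffordFrame x) y

theorem differentiable_FKM_uncurry :
    Differentiable ℝ fun z : WithLp 2 (EuclideanSpace ℝ (Fin N) × EuclideanSpace ℝ (Fin N)) =>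
      FKM A (WithLp.ofLp z).1 (WithLp.ofLp z).2 := by
  have hfst :=
    (WithLp.fstL 2 ℝ (EuclideanSpace ℝ (Fin N)) (EuclideanSpace ℝ (Fin N))).differentiable
  have hsnd :=
    (WithLp.sndL 2 ℝ (EuclideanSpace ℝ (Fin N)) (EuclideanSpace ℝ (Fin N))).differentiable
  exact ((hfst.inner ℝ hsnd).pow 2).add
    (Differentiable.fun_sum fun q _ => (((differentiable_act _).comp hfst).inner ℝ hsnd).pow 2)

end CliffordSystem

theorem stmt1_general (n m : ℕ)
    (A : Fin (m - 1) → Matrix (Fin (n + 1)) (Fin (n + 1)) ℝ)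
    (hA : IsSkewCliffordSystem A)
    (x y : EuclideanSpace ℝ (Fin (n + 1))) :
    gradient (fun x' => FKM A x' y) x =
        (2 * ⟪x, y⟫) • y + ∑ q, (2 * ⟪act (A q) x, y⟫) • act (A q)ᵀ y ∧
    ‖gradient (fun x' => FKM A x' y) x‖ ^ 2 = 4 * FKM A x y * ‖y‖ ^ 2 ∧
    ‖gradient (fun y' => FKM A x y') y‖ ^ 2 = 4 * FKM A x y * ‖x‖ ^ 2 ∧
    ‖gradient
        (fun z : WithLp 2 (EuclideanSpace ℝ (Fin (n + 1)) × EuclideanSpace ℝ (Fin (n + 1))) =>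
          FKM A (WithLp.equiv 2 _ z).1 (WithLp.equiv 2 _ z).2)
        ((WithLp.equiv 2 _).symm (x, y))‖ ^ 2 =
      4 * FKM A x y * (‖x‖ ^ 2 + ‖y‖ ^ 2) := by
  refine ⟨(hasGradientAt_FKM_left x y).gradient, hA.norm_sq_gradient_FKM_left x y,
    hA.norm_sq_gradient_FKM_right x y, ?_⟩
  simp only [WithLp.equiv_apply, WithLp.equiv_symm_apply]
  rw [gradient_withLp_prod differentiable_FKM_uncurry.differentiableAt]
  simp only [WithLp.prod_norm_sq_eq_of_L2, WithLp.toLp_fst, WithLp.toLp_snd,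
    hA.norm_sq_gradient_FKM_left, hA.norm_sq_gradient_FKM_right]
  ring

/-- the gradient of `F` in the `x`-variable equals
`2⟨x,y⟩ y + 2 Σ_q ⟨A_q x, y⟩ A_qᵀ y`, its squared norm equals `4 F(x,y) ‖y‖²`, the
squared norm of the gradient of `F` in the `y`-variable equals `4 F(x,y) ‖x‖²`, and
the squared norm of the full Euclidean gradient of `F` at `(x,y)` equals
`4 F(x,y) (‖x‖² + ‖y‖²)`. -/
theorem stmt1 (n m : ℕ) (hn : 1 ≤ n) (hm : 1 ≤ m)
    (A : Fin (m - 1) → Matrix (Fin (n + 1)) (Fin (n + 1)) ℝ)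
    (hA : IsSkewCliffordSystem A)
    (x y : EuclideanSpace ℝ (Fin (n + 1))) :
    gradient (fun x' => FKM A x' y) x =
        (2 * ⟪x, y⟫) • y + ∑ q, (2 * ⟪act (A q) x, y⟫) • act (A q)ᵀ y ∧
    ‖gradient (fun x' => FKM A x' y) x‖ ^ 2 = 4 * FKM A x y * ‖y‖ ^ 2 ∧
    ‖gradient (fun y' => FKM A x y') y‖ ^ 2 = 4 * FKM A x y * ‖x‖ ^ 2 ∧
    ‖gradient
        (fun z : WithLp 2 (EuclideanSpace ℝ (Fin (n + 1)) × EuclideanSpace ℝ (Fin (n + 1))) =>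
          FKM A (WithLp.equiv 2 _ z).1 (WithLp.equiv 2 _ z).2)
        ((WithLp.equiv 2 _).symm (x, y))‖ ^ 2 =
      4 * FKM A x y * (‖x‖ ^ 2 + ‖y‖ ^ 2) :=
  stmt1_general n m A hA x y
end
end

section
/- Let n > m ≥ 2 be integers, let A_1, …, A_{m−1} be a skew Clifford system on ℝ^{n+1}, set c = (m−1)/(n−1) and F(x,y) = ⟨x,y⟩² + Σ_{q=1}^{m−1} ⟨A_q x, y⟩². Suppose ‖x‖ = ‖y‖ = 1 and F(x,y) = c; write B_p = ⟨A_p x, y⟩. For real numbers θ ∈ (0, π) and α, set t = sinθ sinα/√(c(1−c)), r = cosθ + sinθ cosα − ct, s = cosθ − sinθ cosα − ct, and x̃ = r x + t(⟨x,y⟩ y + Σ_p B_p A_pᵀ y), ỹ = s y + t(⟨x,y⟩ x + Σ_p B_p A_p x). If ‖x̃‖ = ‖ỹ‖ = 1 and F(x̃, ỹ) = c, then θ ≥ min{arctan√(c/(1−c)), arctan√((1−c)/c)}. (This computes the normal radius of the cone over the minimal FKM isoparametric hypersurface: every normal geodesic in S^{2n+1}(√2) starting on the hypersurface meets it again only after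 distance at least min{arctan√(c/(1−c)), arctan√((1−c)/c)}.) -/
open Matrix
open scoped RealInnerProductSpace BigOperators

noncomputable section

/-!
Write `T(w) = w₀ • 1 + ∑ w_p A_p` (`cliffordMatrix`), `z = (⟨x,y⟩, (B_p)_p)` and `T = T(z)`, so
that `x̃ = r x + t Tᵀ y` and `ỹ = s y + t T x`. The Clifford relations give
`T(w)ᵀ T(w') + T(w')ᵀ T(w) = 2 ⟨w, w'⟩ • 1`, and the same with the transposes on the right; in
particular `Tᵀ T = |z|² • 1 = F(x,y) • 1`. These identities yield
`⟨T(w) x̃, ỹ⟩ = K ⟨T(w) x, y⟩` with `K = rs + rt + st + ct²`, hence `F(x̃,ỹ) = K² c`, and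
`‖x̃‖² = r² + 2crt + ct²`. So `F(x̃,ỹ) = c` forces `K = ±1` and `‖x̃‖ = 1` forces
`cos θ cos α = 0`. For `θ < π/2` this leaves `cos α = 0`, and then `K = 1` resp. `K = -1`
gives `tan² θ = (1-c)/c` resp. `c/(1-c)`.
-/

variable {N : ℕ}

section act

variable (M P : Matrix (Fin N) (Fin N) ℝ) (v w : EuclideanSpace ℝ (Fin N))

lemma act_add_right : act M (v + w) = act M v + act M w := map_add _ v w

lemma act_smul_right (r : ℝ) : act M (r • v) = r • act M v := map_smul _ r v

lemma act_one : act 1 v = v := by simp [act]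

lemma act_add_left : act (M + P) v = act M v + act P v := by simp [act]

lemma act_sub_left : act (M - P) v = act M v - act P v := by simp [act]

lemma act_smul_left (r : ℝ) : act (r • M) v = r • act M v := by simp [act]

lemma act_mul_s11 : act (M * P) v = act M (act P v) := by simp [act]

lemma act_sum_left {ι : Type*} (s : Finset ι) (f : ι → Matrix (Fin N) (Fin N) ℝ) :
    act (∑ i ∈ s, f i) v = ∑ i ∈ s, act (f i) v := by simp [act]

lemma inner_act_left_s11 : ⟪act M v, w⟫ = ⟪v, act Mᵀ w⟫ := by
  rw [act, act, ← Matrix.conjTranspose_eq_transpose_of_trivial,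
    Matrix.toEuclideanLin_conjTranspose_eq_adjoint, LinearMap.adjoint_inner_right]

lemma inner_act_act_of_transpose_mul_add {l : ℝ} (h : Mᵀ * P + Pᵀ * M = (2 * l) • 1) :
    ⟪act M v, act P v⟫ = l * ⟪v, v⟫ := by
  have hsum : ⟪act M v, act P v⟫ + ⟪act P v, act M v⟫ = 2 * l * ⟪v, v⟫ := by
    rw [inner_act_left_s11, inner_act_left_s11, ← act_mul_s11, ← act_mul_s11, ← inner_add_right,
      ← act_add_left, h, act_smul_left, act_one, real_inner_smul_right]
  linarith [real_inner_comm (act M v) (act P v)]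

end act

lemma inner_act_shifted_pair {T M : Matrix (Fin N) (Fin N) ℝ} {x y : EuclideanSpace ℝ (Fin N)}
    (hx : ‖x‖ = 1) (hy : ‖y‖ = 1) {c l : ℝ} (hT : Tᵀ * T = c • 1)
    (hTxy : ⟪act T x, y⟫ = c) (hMxy : ⟪act M x, y⟫ = l)
    (h₁ : Mᵀ * T + Tᵀ * M = (2 * l) • 1) (h₂ : T * Mᵀ + M * Tᵀ = (2 * l) • 1) (r s t : ℝ) :
    ⟪act M (r • x + t • act Tᵀ y), s • y + t • act T x⟫ =
      (r * s + r * t + s * t + c * t ^ 2) * l := by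
  have hxx : ⟪x, x⟫ = 1 := by rw [real_inner_self_eq_norm_sq, hx, one_pow]
  have hyy : ⟪y, y⟫ = 1 := by rw [real_inner_self_eq_norm_sq, hy, one_pow]
  have hMxTx : ⟪act M x, act T x⟫ = l := by
    rw [inner_act_act_of_transpose_mul_add _ _ _ h₁, hxx, mul_one]
  have hMTyy : ⟪act M (act Tᵀ y), y⟫ = l := by
    rw [inner_act_left_s11, inner_act_act_of_transpose_mul_add _ _ _ (by simpa using h₂), hyy,
      mul_one]
  have hTMT : T * Mᵀ * T = (2 * l) • T - c • M := by
    rw [eq_sub_of_add_eq h₂, sub_mul, smul_mul_assoc, one_mul, mul_assoc, hT, mul_smul_comm,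
      mul_one]
  have hMTyTx : ⟪act M (act Tᵀ y), act T x⟫ = c * l := by
    rw [← act_mul_s11, inner_act_left_s11, ← act_mul_s11, Matrix.transpose_mul, Matrix.transpose_transpose,
      hTMT, act_sub_left, act_smul_left, act_smul_left, inner_sub_right, real_inner_smul_right,
      real_inner_smul_right, real_inner_comm, hTxy, real_inner_comm, hMxy]
    ring
  simp only [act_add_right, act_smul_right, inner_add_left, inner_add_right,
    real_inner_smul_left, real_inner_smul_right, hMxy, hMxTx, hMTyy, hMTyTx]
  ring

def cliffordMatrix {m : ℕ} (A : Fin (m - 1) → Matrix (Fin N) (Fin N) ℝ) (a : ℝ)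
    (b : Fin (m - 1) → ℝ) : Matrix (Fin N) (Fin N) ℝ :=
  a • 1 + ∑ p, b p • A p

section cliffordMatrix

variable {m : ℕ} (A : Fin (m - 1) → Matrix (Fin N) (Fin N) ℝ)

lemma act_cliffordMatrix (a : ℝ) (b : Fin (m - 1) → ℝ) (v : EuclideanSpace ℝ (Fin N)) :
    act (cliffordMatrix A a b) v = a • v + ∑ p, b p • act (A p) v := by
  simp only [cliffordMatrix, act_add_left, act_smul_left, act_one, act_sum_left]

lemma act_transpose_cliffordMatrix (a : ℝ) (b : Fin (m - 1) → ℝ)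
    (v : EuclideanSpace ℝ (Fin N)) :
    act (cliffordMatrix A a b)ᵀ v = a • v + ∑ p, b p • act (A p)ᵀ v := by
  simp only [cliffordMatrix, Matrix.transpose_add, Matrix.transpose_smul, Matrix.transpose_one,
    Matrix.transpose_sum, act_add_left, act_smul_left, act_one, act_sum_left]

lemma inner_act_cliffordMatrix (a : ℝ) (b : Fin (m - 1) → ℝ) (x y : EuclideanSpace ℝ (Fin N)) :
    ⟪act (cliffordMatrix A a b) x, y⟫ = a * ⟪x, y⟫ + b ⬝ᵥ fun p => ⟪act (A p) x, y⟫ := by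
  simp only [act_cliffordMatrix, inner_add_left, sum_inner, real_inner_smul_left, dotProduct]

lemma cliffordMatrix_one_zero : cliffordMatrix A 1 0 = 1 := by
  simp [cliffordMatrix]

lemma cliffordMatrix_zero_single (q : Fin (m - 1)) :
    cliffordMatrix A 0 (Pi.single q 1) = A q := by
  simp [cliffordMatrix, Pi.single_apply]

end cliffordMatrix

/-- `Tᵀ y = ∇ₓF / 2` and `T x = ∇_y F / 2` are the normal directions of the hypersurface at
`(x, y)`. -/
def fkmMatrix {m : ℕ} (A : Fin (m - 1) → Matrix (Fin N) (Fin N) ℝ)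
    (x y : EuclideanSpace ℝ (Fin N)) : Matrix (Fin N) (Fin N) ℝ :=
  cliffordMatrix A ⟪x, y⟫ fun p => ⟪act (A p) x, y⟫

lemma FKM_eq_mul_add_dotProduct {m : ℕ} (A : Fin (m - 1) → Matrix (Fin N) (Fin N) ℝ)
    (x y : EuclideanSpace ℝ (Fin N)) :
    FKM A x y = ⟪x, y⟫ * ⟪x, y⟫ +
      (fun p => ⟪act (A p) x, y⟫) ⬝ᵥ fun p => ⟪act (A p) x, y⟫ := by
  simp only [FKM, dotProduct, sq]

lemma inner_act_fkmMatrix {m : ℕ} (A : Fin (m - 1) → Matrix (Fin N) (Fin N) ℝ)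
    (x y : EuclideanSpace ℝ (Fin N)) : ⟪act (fkmMatrix A x y) x, y⟫ = FKM A x y := by
  rw [fkmMatrix, inner_act_cliffordMatrix, FKM_eq_mul_add_dotProduct]

namespace IsSkewCliffordSystem

variable {m : ℕ} {A : Fin (m - 1) → Matrix (Fin N) (Fin N) ℝ} (hA : IsSkewCliffordSystem A)
include hA

lemma sum_smul_mul_add_sum_smul_mul (b b' : Fin (m - 1) → ℝ) :
    (∑ p, b p • A p) * (∑ q, b' q • A q) + (∑ q, b' q • A q) * (∑ p, b p • A p) =
      (-2 * b ⬝ᵥ b') • 1 := by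
  simp only [Finset.sum_mul, Finset.mul_sum, smul_mul_smul_comm]
  rw [Finset.sum_comm, ← Finset.sum_add_distrib]
  simp_rw [← Finset.sum_add_distrib, mul_comm (b' _) (b _), ← smul_add, hA.1, smul_ite,
    smul_zero, Finset.sum_ite_eq, Finset.mem_univ, if_true, smul_smul, ← Finset.sum_smul,
    dotProduct, Finset.mul_sum, mul_comm]

lemma transpose_cliffordMatrix (a : ℝ) (b : Fin (m - 1) → ℝ) :
    (cliffordMatrix A a b)ᵀ = cliffordMatrix A a (-b) := by
  simp [cliffordMatrix, Matrix.transpose_sum, hA.2]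

lemma transpose_cliffordMatrix_mul_add (a a' : ℝ) (b b' : Fin (m - 1) → ℝ) :
    (cliffordMatrix A a b)ᵀ * cliffordMatrix A a' b' +
        (cliffordMatrix A a' b')ᵀ * cliffordMatrix A a b =
      (2 * (a * a' + b ⬝ᵥ b')) • 1 := by
  have h := hA.sum_smul_mul_add_sum_smul_mul b b'
  rw [hA.transpose_cliffordMatrix, hA.transpose_cliffordMatrix]
  simp only [cliffordMatrix, Pi.neg_apply, neg_smul, Finset.sum_neg_distrib, add_mul, mul_add,
    neg_mul, smul_mul_assoc, mul_smul_comm, one_mul, mul_one]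
  linear_combination (norm := module) -h

lemma cliffordMatrix_mul_transpose_add (a a' : ℝ) (b b' : Fin (m - 1) → ℝ) :
    cliffordMatrix A a b * (cliffordMatrix A a' b')ᵀ +
        cliffordMatrix A a' b' * (cliffordMatrix A a b)ᵀ =
      (2 * (a * a' + b ⬝ᵥ b')) • 1 := by
  have h := hA.transpose_cliffordMatrix_mul_add a a' (-b) (-b')
  rwa [hA.transpose_cliffordMatrix, hA.transpose_cliffordMatrix, neg_neg, neg_neg,
    ← hA.transpose_cliffordMatrix, ← hA.transpose_cliffordMatrix, neg_dotProduct_neg] at h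

lemma transpose_cliffordMatrix_mul_self (a : ℝ) (b : Fin (m - 1) → ℝ) :
    (cliffordMatrix A a b)ᵀ * cliffordMatrix A a b = (a * a + b ⬝ᵥ b) • 1 := by
  have h := hA.transpose_cliffordMatrix_mul_add a a b b
  rw [← two_smul ℝ, mul_smul] at h
  exact smul_right_injective _ two_ne_zero h

lemma transpose_fkmMatrix_mul_self (x y : EuclideanSpace ℝ (Fin N)) :
    (fkmMatrix A x y)ᵀ * fkmMatrix A x y = FKM A x y • 1 := by
  rw [fkmMatrix, hA.transpose_cliffordMatrix_mul_self, FKM_eq_mul_add_dotProduct]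

section fkm

variable {x y : EuclideanSpace ℝ (Fin N)}

lemma inner_act_cliffordMatrix_shifted (hx : ‖x‖ = 1) (hy : ‖y‖ = 1) (a : ℝ)
    (b : Fin (m - 1) → ℝ) (r s t : ℝ) :
    ⟪act (cliffordMatrix A a b) (r • x + t • act (fkmMatrix A x y)ᵀ y),
        s • y + t • act (fkmMatrix A x y) x⟫ =
      (r * s + r * t + s * t + FKM A x y * t ^ 2) * ⟪act (cliffordMatrix A a b) x, y⟫ := by
  refine inner_act_shifted_pair hx hy (hA.transpose_fkmMatrix_mul_self x y)
    (inner_act_fkmMatrix A x y) rfl ?_ ?_ r s t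
  · rw [fkmMatrix, hA.transpose_cliffordMatrix_mul_add, inner_act_cliffordMatrix]
  · rw [fkmMatrix, add_comm, hA.cliffordMatrix_mul_transpose_add, inner_act_cliffordMatrix]

lemma FKM_shifted (hx : ‖x‖ = 1) (hy : ‖y‖ = 1) (r s t : ℝ) :
    FKM A (r • x + t • act (fkmMatrix A x y)ᵀ y) (s • y + t • act (fkmMatrix A x y) x) =
      (r * s + r * t + s * t + FKM A x y * t ^ 2) ^ 2 * FKM A x y := by
  have h₀ := hA.inner_act_cliffordMatrix_shifted hx hy 1 0 r s t
  have h := fun q => hA.inner_act_cliffordMatrix_shifted hx hy 0 (Pi.single q 1) r s t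
  simp only [cliffordMatrix_one_zero, act_one, cliffordMatrix_zero_single] at h₀ h
  simp only [FKM, h₀, h, mul_pow, ← Finset.mul_sum]
  ring

lemma norm_sq_shifted (hx : ‖x‖ = 1) (hy : ‖y‖ = 1) (r t : ℝ) :
    ‖r • x + t • act (fkmMatrix A x y)ᵀ y‖ ^ 2 =
      r ^ 2 + 2 * r * t * FKM A x y + t ^ 2 * FKM A x y := by
  have hU : ⟪act (fkmMatrix A x y)ᵀ y, act (fkmMatrix A x y)ᵀ y⟫ = FKM A x y := by
    rw [inner_act_act_of_transpose_mul_add (l := FKM A x y), real_inner_self_eq_norm_sq, hy,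
      one_pow, mul_one]
    rw [Matrix.transpose_transpose, fkmMatrix, hA.cliffordMatrix_mul_transpose_add,
      FKM_eq_mul_add_dotProduct]
  have hxU : ⟪x, act (fkmMatrix A x y)ᵀ y⟫ = FKM A x y := by
    rw [← inner_act_left_s11, inner_act_fkmMatrix]
  have hxx : ⟪x, x⟫ = 1 := by rw [real_inner_self_eq_norm_sq, hx, one_pow]
  rw [← real_inner_self_eq_norm_sq]
  simp only [inner_add_left, inner_add_right, real_inner_smul_left, real_inner_smul_right, hU,
    hxU, real_inner_comm x, hxx]
  ring

end fkm

end IsSkewCliffordSystem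

lemma mul_cos_sq_eq_or_of_shift {S C u v c t r s : ℝ} (hS : 0 < S) (hC : 0 < C)
    (hSC : S ^ 2 + C ^ 2 = 1) (huv : u ^ 2 + v ^ 2 = 1)
    (ht : c * (1 - c) * t ^ 2 = S ^ 2 * u ^ 2)
    (hr : r = C + S * v - c * t) (hs : s = C - S * v - c * t)
    (hK : (r * s + r * t + s * t + c * t ^ 2) ^ 2 = 1)
    (hn : r ^ 2 + 2 * r * t * c + t ^ 2 * c = 1) :
    (1 - c) * C ^ 2 = c * S ^ 2 ∨ c * C ^ 2 = (1 - c) * S ^ 2 := by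
  subst hr hs
  have hv : v = 0 := by
    have h : 2 * C * S * v = 0 := by linear_combination hn - ht - S ^ 2 * huv - hSC
    simpa [hC.ne', hS.ne'] using h
  subst hv
  simp only [mul_zero, add_zero, sub_zero] at hK
  have hu : u ^ 2 = 1 := by linear_combination huv
  have hKval : (C - c * t) * (C - c * t) + (C - c * t) * t + (C - c * t) * t + c * t ^ 2 =
      C ^ 2 + 2 * (1 - c) * C * t - S ^ 2 := by
    linear_combination -ht - S ^ 2 * hu
  rw [hKval, sq_eq_one_iff] at hK
  rcases hK with hK | hK
  · left
    have h : (1 - c) * C * t = S ^ 2 := by linear_combination (hK - hSC) / 2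
    have h' : S ^ 2 * ((1 - c) * C ^ 2 - c * S ^ 2) = 0 := by
      linear_combination c * ((1 - c) * C * t + S ^ 2) * h - (1 - c) * C ^ 2 * ht
        - (1 - c) * C ^ 2 * S ^ 2 * hu
    simpa [hS.ne', sub_eq_zero] using h'
  · right
    have h : C * (C + (1 - c) * t) = 0 := by linear_combination (hK + hSC) / 2
    have h' : C + (1 - c) * t = 0 := by simpa [hC.ne'] using h
    linear_combination c * (C - (1 - c) * t) * h' + (1 - c) * ht + (1 - c) * S ^ 2 * hu

open Real in
lemma eq_arctan_sqrt_of_mul_cos_sq_eq {θ a b : ℝ} (hθ : θ ∈ Set.Ioo 0 (π / 2)) (hb : b ≠ 0)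
    (h : a * cos θ ^ 2 = b * sin θ ^ 2) : θ = arctan √(a / b) := by
  have hcos : 0 < cos θ := cos_pos_of_mem_Ioo ⟨by linarith [hθ.1, pi_pos], hθ.2⟩
  have htan : 0 < tan θ := tan_pos_of_pos_of_lt_pi_div_two hθ.1 hθ.2
  have hab : a / b = tan θ ^ 2 := by
    rw [tan_eq_sin_div_cos, div_pow, div_eq_div_iff hb (pow_ne_zero _ hcos.ne')]
    linarith
  rw [hab, sqrt_sq htan.le, arctan_tan (by linarith [hθ.1, pi_pos]) hθ.2]

open Real in
lemma min_arctan_le_of_shift {c θ α t r s : ℝ} (hc0 : 0 < c) (hc1 : c < 1)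
    (hθ : θ ∈ Set.Ioo 0 π) (ht : t = sin θ * sin α / √(c * (1 - c)))
    (hr : r = cos θ + sin θ * cos α - c * t) (hs : s = cos θ - sin θ * cos α - c * t)
    (hK : (r * s + r * t + s * t + c * t ^ 2) ^ 2 = 1)
    (hn : r ^ 2 + 2 * r * t * c + t ^ 2 * c = 1) :
    min (arctan √(c / (1 - c))) (arctan √((1 - c) / c)) ≤ θ := by
  rcases lt_or_ge θ (π / 2) with hlt | hge
  · have hS : 0 < sin θ := sin_pos_of_pos_of_lt_pi hθ.1 hθ.2
    have hC : 0 < cos θ := cos_pos_of_mem_Ioo ⟨by linarith [hθ.1, pi_pos], hlt⟩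
    have h1c : 0 < 1 - c := by linarith
    have ht' : c * (1 - c) * t ^ 2 = sin θ ^ 2 * sin α ^ 2 := by
      rw [ht, div_pow, sq_sqrt (by positivity)]
      field_simp
    rcases mul_cos_sq_eq_or_of_shift hS hC (sin_sq_add_cos_sq θ) (sin_sq_add_cos_sq α) ht' hr hs
      hK hn with h | h
    · rw [eq_arctan_sqrt_of_mul_cos_sq_eq ⟨hθ.1, hlt⟩ hc0.ne' h]
      exact min_le_right _ _
    · rw [eq_arctan_sqrt_of_mul_cos_sq_eq ⟨hθ.1, hlt⟩ (by linarith) h]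
      exact min_le_left _ _
  · exact (min_le_left _ _).trans ((arctan_lt_pi_div_two _).le.trans hge)

theorem stmt11_general (n m : ℕ) (hm : 2 ≤ m) (hmn : m < n)
    (A : Fin (m - 1) → Matrix (Fin (n + 1)) (Fin (n + 1)) ℝ)
    (hA : IsSkewCliffordSystem A)
    (c : ℝ) (hc : c = ((m : ℝ) - 1) / ((n : ℝ) - 1))
    (x y : EuclideanSpace ℝ (Fin (n + 1))) (hx : ‖x‖ = 1) (hy : ‖y‖ = 1)
    (hF : FKM A x y = c)
    (θ α : ℝ) (hθ : θ ∈ Set.Ioo 0 Real.pi)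
    (t r s : ℝ)
    (ht : t = Real.sin θ * Real.sin α / Real.sqrt (c * (1 - c)))
    (hr : r = Real.cos θ + Real.sin θ * Real.cos α - c * t)
    (hs : s = Real.cos θ - Real.sin θ * Real.cos α - c * t)
    (xt yt : EuclideanSpace ℝ (Fin (n + 1)))
    (hxt : xt = r • x + t • (⟪x, y⟫ • y + ∑ p, ⟪act (A p) x, y⟫ • act (A p)ᵀ y))
    (hyt : yt = s • y + t • (⟪x, y⟫ • x + ∑ p, ⟪act (A p) x, y⟫ • act (A p) x))
    (hxt1 : ‖xt‖ = 1)
    (hFt : FKM A xt yt = c) :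
    θ ≥ min (Real.arctan (Real.sqrt (c / (1 - c))))
        (Real.arctan (Real.sqrt ((1 - c) / c))) := by
  have hm' : (2 : ℝ) ≤ m := by exact_mod_cast hm
  have hmn' : (m : ℝ) < n := by exact_mod_cast hmn
  have hc0 : 0 < c := by rw [hc]; apply div_pos <;> linarith
  have hc1 : c < 1 := by rw [hc, div_lt_one (by linarith)]; linarith
  rw [← act_transpose_cliffordMatrix, ← fkmMatrix] at hxt
  rw [← act_cliffordMatrix, ← fkmMatrix] at hyt
  have hK : (r * s + r * t + s * t + c * t ^ 2) ^ 2 = 1 := by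
    rw [hxt, hyt, hA.FKM_shifted hx hy, hF] at hFt
    simpa [hc0.ne'] using hFt
  have hn : r ^ 2 + 2 * r * t * c + t ^ 2 * c = 1 := by
    rw [← hF, ← hA.norm_sq_shifted hx hy, ← hxt, hxt1, one_pow]
  exact min_arctan_le_of_shift hc0 hc1 hθ ht hr hs hK hn

/-- in the setting of Statement 10, if moreover `F(x̃,ỹ) = c`, then
`θ ≥ min{arctan√(c/(1−c)), arctan√((1−c)/c)}`.  (This computes the normal radius of
the cone over the minimal FKM isoparametric hypersurface.) -/
theorem stmt11 (n m : ℕ) (hm : 2 ≤ m) (hmn : m < n)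
    (A : Fin (m - 1) → Matrix (Fin (n + 1)) (Fin (n + 1)) ℝ)
    (hA : IsSkewCliffordSystem A)
    (c : ℝ) (hc : c = ((m : ℝ) - 1) / ((n : ℝ) - 1))
    (x y : EuclideanSpace ℝ (Fin (n + 1))) (hx : ‖x‖ = 1) (hy : ‖y‖ = 1)
    (hF : FKM A x y = c)
    (θ α : ℝ) (hθ : θ ∈ Set.Ioo 0 Real.pi)
    (t r s : ℝ)
    (ht : t = Real.sin θ * Real.sin α / Real.sqrt (c * (1 - c)))
    (hr : r = Real.cos θ + Real.sin θ * Real.cos α - c * t)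
    (hs : s = Real.cos θ - Real.sin θ * Real.cos α - c * t)
    (xt yt : EuclideanSpace ℝ (Fin (n + 1)))
    (hxt : xt = r • x + t • (⟪x, y⟫ • y + ∑ p, ⟪act (A p) x, y⟫ • act (A p)ᵀ y))
    (hyt : yt = s • y + t • (⟪x, y⟫ • x + ∑ p, ⟪act (A p) x, y⟫ • act (A p) x))
    (hxt1 : ‖xt‖ = 1) (hyt1 : ‖yt‖ = 1)
    (hFt : FKM A xt yt = c) :
    θ ≥ min (Real.arctan (Real.sqrt (c / (1 - c))))
        (Real.arctan (Real.sqrt ((1 - c) / c))) :=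
  stmt11_general n m hm hmn A hA c hc x y hx hy hF θ α hθ t r s ht hr hs xt yt hxt hyt hxt1 hFt
end
end

section
/- For every real number k ≥ 21, one has 2·arctan(5/(2k)) < arccos(1 − 1/(k−1)); equivalently, cos(2·arctan(5/(2k))) > 1 − 1/(k−1). (This verifies Lawlor's condition that twice the vanishing angle, bounded by 2·arctan(5/(2k)) for minimal product cones of dimension k ≥ 21, is less than the lower bound arccos(1 − 1/(k−1)) for the normal radius, proving that the minimal product cones over minimal FKM isoparametric hypersurfaces of dimension at least 21 are area-minimizing.) -/
/-- for every real `k ≥ 21`, `2·arctan(5/(2k)) < arccos(1 − 1/(k−1))`;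
equivalently, `cos(2·arctan(5/(2k))) > 1 − 1/(k−1)`.  (Lawlor's condition: twice the
vanishing angle of the `k`-dimensional minimal product cone is less than the lower
bound for the normal radius.) -/
theorem stmt16 (k : ℝ) (hk : 21 ≤ k) :
    2 * Real.arctan (5 / (2 * k)) < Real.arccos (1 - 1 / (k - 1)) ∧
    Real.cos (2 * Real.arctan (5 / (2 * k))) > 1 - 1 / (k - 1) := by
  have hk0 : (0:ℝ) < k := by linarith
  have hk1 : (0:ℝ) < k - 1 := by linarith
  set x : ℝ := 5 / (2 * k) with hxdef
  have hx0 : 0 < x := by positivity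
  have hx2 : (0:ℝ) < 1 + x ^ 2 := by positivity
  have hcos : Real.cos (2 * Real.arctan x) = 2 * (1 / (1 + x ^ 2)) - 1 := by
    rw [Real.cos_two_mul, Real.cos_arctan]
    rw [div_pow, one_pow, Real.sq_sqrt hx2.le]
  have e : 2 * (1 / (1 + x ^ 2)) - 1 - (1 - 1 / (k - 1))
      = (4 * k ^ 2 - 50 * k + 75) / ((4 * k ^ 2 + 25) * (k - 1)) := by
    rw [hxdef]
    field_simp
    ring
  have hnum : (0:ℝ) < 4 * k ^ 2 - 50 * k + 75 := by nlinarith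
  have hden : (0:ℝ) < (4 * k ^ 2 + 25) * (k - 1) := by positivity
  have hdiff : 0 < 2 * (1 / (1 + x ^ 2)) - 1 - (1 - 1 / (k - 1)) := by
    rw [e]; positivity
  have hkey : Real.cos (2 * Real.arctan x) > 1 - 1 / (k - 1) := by
    rw [hcos]; linarith
  refine ⟨?_, hkey⟩
  have h1 : 0 ≤ 2 * Real.arctan x := by
    have h := Real.arctan_strictMono hx0
    rw [Real.arctan_zero] at h; linarith
  have h2 : 2 * Real.arctan x ≤ Real.pi := by
    have := Real.arctan_lt_pi_div_two x; linarith [Real.pi_pos]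
  have hneg1 : (-1:ℝ) ≤ 1 - 1 / (k - 1) := by
    have : 1 / (k - 1) ≤ 1 := by
      rw [div_le_one hk1]; linarith
    linarith
  have hmem1 : Real.cos (2 * Real.arctan x) ∈ Set.Icc (-1:ℝ) 1 :=
    ⟨Real.neg_one_le_cos _, Real.cos_le_one _⟩
  have hmem2 : (1 - 1 / (k - 1)) ∈ Set.Icc (-1:ℝ) 1 := by
    constructor
    · exact hneg1
    · have : 0 < 1 / (k - 1) := by positivity
      linarith
  have h := Real.strictAntiOn_arccos hmem2 hmem1 hkey
  rwa [Real.arccos_cos h1 h2] at h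
end
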